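/- Let (W,S) be a Coxeter system, I ⊆ S, and t ∈ S \ I. Then the centraliser of t in the parabolic subgroup W_I equals W_{I(t)}, where I(t) = {s ∈ I : m_{s,t} = 2}. Consequently the conjugacy orbit t^{W_I} = {w t w^{-1} : w ∈ W_I} is in bijection with W_I / W_{I(t)}. -/

import Mathlib

/-!
Let `w ∈ W_I` commute with `s_t` and induct on `ℓ(w)`. A left descent `s_i` of `w` lies in `I` and
is also a left descent of `s_t w = w s_t`, which has length `ℓ(w) + 1`. By the strong exchange
condition `s_i` occurs in the left inversion sequence of `t` followed by a word for `w` in `I`, so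
`z = s_t s_i s_t ∈ W_I`. Since `s_t` is never a left descent of an element of `W_I`,
`ℓ(z) < ℓ(s_t z) ≤ 2`; the reflection `z` is then a simple reflection `s_j` with `j ∈ I ∩ {i, t}`,
so `s_t s_i s_t = s_i` and `m_{i,t} = 2`, and `s_i w` is a shorter element commuting with `s_t`.

The strong exchange condition comes from Tits' sign representation of `W` on `W × {±1}`. That
`s_j ∈ W_J` only for `j ∈ J`, and that commuting simple reflections have `m = 2`, come from the
geometric representation. The bijection `t^{W_I} ≃ W_I / W_{I(t)}` is orbit–stabiliser.
-/

open Finset Module Polynomial.Chebyshev Real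

namespace Module

variable {R V : Type*} [CommRing R] [AddCommGroup V] [Module R V] {x y : V} {f g : Dual R V}

theorem reflection_mul_reflection_pow_apply_of_eq (hf : f x = 2) (hg : g y = 2) {c : R}
    (hfy : f y = -(2 * c)) (hgx : g x = -(2 * c)) (k : ℕ) (z : V) :
    ((reflection hf * reflection hg) ^ k) z =
      z - ((S R (k - 1)).eval (2 * c) *
            ((S R (k - 1)).eval (2 * c) * f z + (S R k).eval (2 * c) * g z)) • x
        - ((S R (k - 1)).eval (2 * c) *
            ((S R (k - 2)).eval (2 * c) * f z + (S R (k - 1)).eval (2 * c) * g z)) • y := by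
  have recurrence (n : ℤ) : (S R n).eval (2 * c) =
      2 * c * (S R (n - 1)).eval (2 * c) - (S R (n - 2)).eval (2 * c) := by
    have := congr_arg (Polynomial.eval (2 * c)) (S_sub_two R n)
    simp only [Polynomial.eval_sub, Polynomial.eval_mul, Polynomial.eval_X] at this
    linear_combination this
  have pell (n : ℤ) : (S R (n - 1)).eval (2 * c) ^ 2 + (S R n).eval (2 * c) ^ 2
      - 2 * c * (S R (n - 1)).eval (2 * c) * (S R n).eval (2 * c) = 1 := by
    simpa using congr_arg (Polynomial.eval (2 * c)) (S_sq_add_S_sq R (n - 1))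
  induction k with
  | zero => simp
  | succ k ih =>
    rw [pow_succ', LinearEquiv.mul_apply, ih, LinearEquiv.mul_apply]
    simp only [reflection_apply, map_sub, map_smul, hf, hg, hfy, hgx]
    push_cast
    rw [add_sub_cancel_right, show (k : ℤ) + 1 - 2 = k - 1 by ring, recurrence (k + 1),
      add_sub_cancel_right, show (k : ℤ) + 1 - 2 = k - 1 by ring]
    match_scalars
    · ring
    · linear_combination (f z + 2 * c * g z) * pell k
        + 2 * c * f z * (S R (k - 1)).eval (2 * c) * recurrence k
    · linear_combination g z * pell k + f z * (S R (k - 1)).eval (2 * c) * recurrence k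

end Module

theorem Real.eq_two_of_cos_pi_div_eq_zero {m : ℕ} (h : cos (π / m) = 0) : m = 2 := by
  obtain _ | _ | _ | m := m
  · simp at h
  · simp at h
  · rfl
  · have hθ : 0 < π / ↑(m + 3) := by positivity
    have hθ' : π / ↑(m + 3) < π / 2 := by
      rw [div_lt_div_iff_of_pos_left pi_pos (by positivity) two_pos]
      push_cast
      linarith [(m.cast_nonneg : (0 : ℝ) ≤ m)]
    exact absurd h (cos_pos_of_mem_Ioo ⟨by linarith, hθ'⟩).ne'

noncomputable def Subgroup.conjOrbitEquivQuotient {G : Type*} [Group G] (K H : Subgroup G) (g : G)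
    (hH : ∀ k ∈ K, (k * g = g * k ↔ k ∈ H)) :
    {x : G // ∃ k ∈ K, x = k * g * k⁻¹} ≃ K ⧸ H.subgroupOf K :=
  (Setoid.quotientKerEquivOfSurjective (fun k : K => ⟨k * g * k⁻¹, k, k.2, rfl⟩)
    (by rintro ⟨x, k, hk, rfl⟩; exact ⟨⟨k, hk⟩, rfl⟩)).symm.trans
  (Quotient.congrRight fun a b => by
    rw [Setoid.ker_def, QuotientGroup.leftRel_apply, Subgroup.mem_subgroupOf, ← hH _ (a⁻¹ * b).2,
      Subtype.mk.injEq, ← mul_left_cancel_iff (a := (a⁻¹ : G)),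
      ← mul_right_cancel_iff (a := (b : G))]
    simp only [Subgroup.coe_mul, Subgroup.coe_inv, mul_assoc, inv_mul_cancel_left, inv_mul_cancel,
      mul_one]
    exact eq_comm)

namespace CoxeterMatrix

variable {B : Type*} (M : CoxeterMatrix B)

/-- The functional `2 ⟪e a, ·⟫` of the Tits form `⟪e a, e b⟫ = -cos (π / M a b)`. Since `π / 0 = 0`,
an infinite bond `M a b = 0` gets the intended value `-1`. -/
noncomputable def coroot (a : B) : Dual ℝ (B →₀ ℝ) :=
  Finsupp.linearCombination ℝ fun b => -(2 * cos (π / M a b))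

theorem coroot_single (a b : B) : M.coroot a (Finsupp.single b 1) = -(2 * cos (π / M a b)) := by
  simp [coroot]

theorem coroot_single_self (a : B) : M.coroot a (Finsupp.single a 1) = 2 := by
  simp [coroot_single]

noncomputable def geomReflection (a : B) : (B →₀ ℝ) ≃ₗ[ℝ] (B →₀ ℝ) :=
  reflection (M.coroot_single_self a)

theorem geomReflection_apply (a : B) (x : B →₀ ℝ) :
    M.geomReflection a x = x - M.coroot a x • Finsupp.single a 1 :=
  reflection_apply x _

theorem geomReflection_mul_self (a : B) : M.geomReflection a * M.geomReflection a = 1 := by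
  ext x : 1
  rw [LinearEquiv.mul_apply]
  exact involutive_reflection _ x

theorem geomReflection_mul_pow_eq_one {a b : B} (hab : a ≠ b) (hm : M a b ≠ 0) :
    (M.geomReflection a * M.geomReflection b) ^ M a b = 1 := by
  have h2 : 2 ≤ M a b := by have := M.off_diagonal a b hab; omega
  have hθ : 0 < π / M a b := by positivity
  have hθπ : π / M a b < π := div_lt_self pi_pos (by exact_mod_cast h2)
  have hsin : sin (π / M a b) ≠ 0 := (sin_pos_of_pos_of_lt_pi hθ hθπ).ne'
  -- `S (m - 1) (2 cos (π / m)) = sin π / sin (π / m)` kills the correction terms of the power.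
  have hS : (S ℝ (M a b - 1)).eval (2 * cos (π / M a b)) = 0 := by
    have := S_two_mul_real_cos (π / M a b) (M a b - 1)
    rw [Int.cast_sub, Int.cast_natCast, Int.cast_one, sub_add_cancel,
      mul_div_cancel₀ _ (by positivity), sin_pi] at this
    exact (mul_eq_zero.mp this).resolve_right hsin
  ext x : 1
  rw [geomReflection, geomReflection, reflection_mul_reflection_pow_apply_of_eq _ _
    (M.coroot_single a b) (by rw [coroot_single, M.symmetric]), hS]
  simp

theorem isLiftable_geomReflection : M.IsLiftable M.geomReflection := by
  intro a b
  rcases eq_or_ne a b with rfl | hab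
  · rw [M.diagonal, pow_one, geomReflection_mul_self]
  · rcases eq_or_ne (M a b) 0 with h0 | hm
    · rw [h0, pow_zero]
    · exact M.geomReflection_mul_pow_eq_one hab hm

theorem geomReflection_apply_single_self (a : B) :
    M.geomReflection a (Finsupp.single a 1) = -Finsupp.single a 1 :=
  reflection_apply_self _

theorem geomReflection_apply_of_ne {a c : B} (hc : c ≠ a) (x : B →₀ ℝ) :
    M.geomReflection a x c = x c := by
  simp [geomReflection_apply, Finsupp.single_eq_of_ne hc]

end CoxeterMatrix

namespace CoxeterSystem

variable {B W : Type*} [Group W] {M : CoxeterMatrix B} (cs : CoxeterSystem M W)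

theorem simple_commute_of_eq_two {i j : B} (h : M i j = 2) :
    Commute (cs.simple i) (cs.simple j) := by
  have := cs.simple_mul_simple_pow i j
  rw [h, pow_two, mul_eq_one_iff_eq_inv, mul_inv_rev, inv_simple, inv_simple] at this
  exact this

section GeometricRepresentation

noncomputable def geomRep : W →* (B →₀ ℝ) ≃ₗ[ℝ] (B →₀ ℝ) :=
  cs.lift ⟨M.geomReflection, M.isLiftable_geomReflection⟩

theorem geomRep_simple (a : B) : cs.geomRep (cs.simple a) = M.geomReflection a :=
  cs.lift_apply_simple _ a

theorem simple_mem_closure_simple_iff {J : Set B} {j : B} :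
    cs.simple j ∈ Subgroup.closure (cs.simple '' J) ↔ j ∈ J := by
  refine ⟨fun h => ?_, fun hj => Subgroup.subset_closure ⟨j, hj, rfl⟩⟩
  by_contra hj
  have fixes_coord : ∀ w ∈ Subgroup.closure (cs.simple '' J), ∀ x, cs.geomRep w x j = x j := by
    intro w hw
    induction hw using Subgroup.closure_induction with
    | mem _ hw =>
      obtain ⟨a, ha, rfl⟩ := hw
      rw [geomRep_simple]
      exact M.geomReflection_apply_of_ne (by rintro rfl; exact hj ha)
    | one => simp
    | mul _ _ _ _ hu hv => simp [LinearEquiv.mul_apply, hu, hv]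
    | inv u _ hu =>
      intro x
      rw [← hu, ← LinearEquiv.mul_apply, ← map_mul, mul_inv_cancel, map_one]
      rfl
  have := fixes_coord _ h (Finsupp.single j 1)
  norm_num [geomRep_simple, M.geomReflection_apply_single_self] at this

theorem eq_two_of_commute {a b : B} (hab : a ≠ b) (h : Commute (cs.simple a) (cs.simple b)) :
    M a b = 2 := by
  have hcomm := congr($(congr(cs.geomRep $h.eq)) (Finsupp.single a 1) b)
  simp only [map_mul, geomRep_simple, LinearEquiv.mul_apply, M.geomReflection_apply_of_ne hab.symm,
    M.geomReflection_apply_single_self, map_neg, Finsupp.neg_apply, self_eq_neg] at hcomm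
  rw [M.geomReflection_apply, Finsupp.sub_apply, Finsupp.smul_apply, M.coroot_single, M.symmetric,
    Finsupp.single_eq_of_ne hab.symm, Finsupp.single_eq_same, smul_eq_mul, mul_one, zero_sub,
    neg_neg] at hcomm
  exact Real.eq_two_of_cos_pi_div_eq_zero (by linarith)

end GeometricRepresentation

section SignRepresentation

open scoped Classical

noncomputable def signedConjFun (i : B) (p : W × ℤˣ) : W × ℤˣ :=
  (cs.simple i * p.1 * cs.simple i, (if p.1 = cs.simple i then -1 else 1) * p.2)

theorem signedConjFun_involutive (i : B) : Function.Involutive (cs.signedConjFun i) := by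
  rintro ⟨r, ε⟩
  have hconj : cs.simple i * r * cs.simple i = cs.simple i ↔ r = cs.simple i := by
    constructor
    · intro h
      simpa [mul_assoc] using congr(cs.simple i * $h * cs.simple i)
    · rintro rfl
      simp
  refine Prod.ext (by simp [signedConjFun, mul_assoc]) ?_
  by_cases h : r = cs.simple i <;> simp [signedConjFun, hconj, h]

noncomputable def signedConj (i : B) : Equiv.Perm (W × ℤˣ) :=
  (cs.signedConjFun_involutive i).toPerm

theorem signedConj_apply (i : B) (r : W) (ε : ℤˣ) :
    cs.signedConj i (r, ε) =
      (cs.simple i * r * cs.simple i, (if r = cs.simple i then -1 else 1) * ε) :=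
  rfl

theorem conj_simple_mul_simple_pow_eq_iff (i j : B) (k n : ℕ) (r : W) :
    (cs.simple i * cs.simple j) ^ k * r * ((cs.simple i * cs.simple j) ^ k)⁻¹
        = (cs.simple j * cs.simple i) ^ n * cs.simple j ↔
      r = (cs.simple j * cs.simple i) ^ (2 * k + n) * cs.simple j := by
  set c := cs.simple i * cs.simple j
  set d := cs.simple j * cs.simple i
  have hinv : c⁻¹ = d := by simp [c, d]
  have hsemiconj : SemiconjBy (cs.simple j) c d := by simp [SemiconjBy, c, d, mul_assoc]
  have key : (c ^ k)⁻¹ * (d ^ n * cs.simple j) * c ^ k = d ^ (2 * k + n) * cs.simple j := by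
    rw [mul_assoc, mul_assoc, (hsemiconj.pow_right k).eq, ← inv_pow, hinv, ← mul_assoc,
      ← mul_assoc, ← pow_add, ← pow_add, two_mul, add_right_comm]
  rw [← key]
  exact ⟨fun h => by rw [← h]; group, fun h => by rw [h]; group⟩

theorem signedConj_mul_pow_apply (i j : B) (k : ℕ) (r : W) (ε : ℤˣ) :
    ((cs.signedConj i * cs.signedConj j) ^ k) (r, ε) =
      ((cs.simple i * cs.simple j) ^ k * r * ((cs.simple i * cs.simple j) ^ k)⁻¹,
        (∏ n ∈ range (2 * k),
          if r = (cs.simple j * cs.simple i) ^ n * cs.simple j then -1 else 1) * ε) := by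
  induction k with
  | zero => simp
  | succ k ih =>
    rw [pow_succ', Equiv.Perm.mul_apply, ih, Equiv.Perm.mul_apply, signedConj_apply,
      signedConj_apply]
    set x := (cs.simple i * cs.simple j) ^ k * r * ((cs.simple i * cs.simple j) ^ k)⁻¹
    have h0 : x = cs.simple j ↔ r = (cs.simple j * cs.simple i) ^ (2 * k) * cs.simple j := by
      simpa using cs.conj_simple_mul_simple_pow_eq_iff i j k 0 r
    have h1 : cs.simple j * x * cs.simple j = cs.simple i ↔
        r = (cs.simple j * cs.simple i) ^ (2 * k + 1) * cs.simple j := by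
      have hflip (y z : W) :
          cs.simple j * y * cs.simple j = z ↔ y = cs.simple j * z * cs.simple j :=
        ⟨fun h => by rw [← h]; simp [mul_assoc], fun h => by rw [h]; simp [mul_assoc]⟩
      rw [hflip, ← cs.conj_simple_mul_simple_pow_eq_iff i j k 1 r, pow_one]
    refine Prod.ext ?_ ?_
    · simp only [x, pow_succ', mul_inv_rev, inv_simple, mul_assoc]
    · rw [h0, h1, mul_add_one, prod_range_succ, prod_range_succ]
      simp only [mul_comm, mul_left_comm]

theorem signedConj_mul_pow_eq_one (i j : B) {m : ℕ} (hc : (cs.simple i * cs.simple j) ^ m = 1)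
    (hd : (cs.simple j * cs.simple i) ^ m = 1) : (cs.signedConj i * cs.signedConj j) ^ m = 1 := by
  ext ⟨r, ε⟩ : 1
  have hperiodic (n : ℕ) : (cs.simple j * cs.simple i) ^ (m + n) =
      (cs.simple j * cs.simple i) ^ n := by
    rw [pow_add, hd, one_mul]
  -- The reflections `(s j * s i) ^ n * s j`, `n < 2 * m`, run twice through one period.
  rw [signedConj_mul_pow_apply, hc, two_mul, prod_range_add]
  simp [hperiodic]

theorem isLiftable_signedConj : M.IsLiftable cs.signedConj := fun i j =>
  cs.signedConj_mul_pow_eq_one i j (cs.simple_mul_simple_pow i j)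
    (by rw [M.symmetric]; exact cs.simple_mul_simple_pow j i)

noncomputable def signRep : W →* Equiv.Perm (W × ℤˣ) :=
  cs.lift ⟨cs.signedConj, cs.isLiftable_signedConj⟩

theorem signRep_simple (i : B) : cs.signRep (cs.simple i) = cs.signedConj i :=
  cs.lift_apply_simple _ i

theorem signRep_apply (w r : W) (ε : ℤˣ) :
    cs.signRep w (r, ε) = (w * r * w⁻¹, (cs.signRep w (r, 1)).2 * ε) := by
  induction w using cs.simple_induction_left generalizing r ε with
  | one => simp
  | mul_simple_left w i ih =>
    rw [map_mul, Equiv.Perm.mul_apply, ih, signRep_simple, signedConj_apply,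
      Equiv.Perm.mul_apply, ih r 1, signedConj_apply]
    simp [mul_assoc]

theorem signRep_wordProd_inv_apply_of_notMem {ω : List B} {r : W}
    (hr : r ∉ cs.leftInvSeq ω) (ε : ℤˣ) :
    cs.signRep (cs.wordProd ω)⁻¹ (r, ε) = ((cs.wordProd ω)⁻¹ * r * cs.wordProd ω, ε) := by
  induction ω generalizing r with
  | nil => simp
  | cons i ω ih =>
    simp only [leftInvSeq, List.mem_cons, List.mem_map, not_or, not_exists, not_and] at hr
    have hconj : cs.simple i * r * cs.simple i ∉ cs.leftInvSeq ω := fun h =>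
      hr.2 _ h (by simp [MulAut.conj_apply, mul_assoc])
    rw [wordProd_cons, mul_inv_rev, inv_simple, map_mul, Equiv.Perm.mul_apply, signRep_simple,
      signedConj_apply, if_neg hr.1, one_mul, ih hconj]
    simp [mul_assoc]

theorem signRep_self_of_isReflection {r : W} (hr : cs.IsReflection r) (ε : ℤˣ) :
    cs.signRep r (r, ε) = (r, -ε) := by
  obtain ⟨u, i, rfl⟩ := hr
  rcases hp : cs.signRep u⁻¹ (u * cs.simple i * u⁻¹, ε) with ⟨x, δ⟩
  obtain rfl : x = cs.simple i := by
    have := congr(Prod.fst $(cs.signRep_apply u⁻¹ (u * cs.simple i * u⁻¹) ε))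
    rw [hp] at this
    simp only at this
    rw [this]
    group
  have hback : cs.signRep u (cs.simple i, δ) = (u * cs.simple i * u⁻¹, ε) := by
    rw [← hp, ← Equiv.Perm.mul_apply, ← map_mul, mul_inv_cancel, map_one, Equiv.Perm.one_apply]
  rw [map_mul, map_mul, Equiv.Perm.mul_apply, Equiv.Perm.mul_apply, hp, signRep_simple,
    signedConj_apply, if_pos rfl, simple_mul_simple_self, one_mul, neg_one_mul]
  rw [signRep_apply, Prod.mk.injEq] at hback
  rw [signRep_apply, mul_neg, hback.2]

/-- The strong exchange condition. -/
theorem mem_leftInvSeq_of_isLeftInversion {ω : List B} {r : W}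
    (h : cs.IsLeftInversion (cs.wordProd ω) r) : r ∈ cs.leftInvSeq ω := by
  by_contra hr
  obtain ⟨α, hα, hrw⟩ := cs.exists_isReduced (r * cs.wordProd ω)
  -- Otherwise the sign of `signRep (r * π ω)⁻¹ (r, 1)` would be `1` computed through `α`,
  -- but `-1` computed through `r⁻¹ = r` and `ω`.
  have hrα : r ∈ cs.leftInvSeq α := by
    by_contra hrα
    have hsign := cs.signRep_wordProd_inv_apply_of_notMem hrα 1
    rw [← hrw, mul_inv_rev, h.1.inv, map_mul, Equiv.Perm.mul_apply,
      cs.signRep_self_of_isReflection h.1, cs.signRep_wordProd_inv_apply_of_notMem hr] at hsign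
    have := congr(Prod.snd $hsign)
    simp at this
  have hlt := (cs.isLeftInversion_of_mem_leftInvSeq hα hrα).2
  rw [← hrw, ← mul_assoc, h.1.mul_self, one_mul] at hlt
  exact lt_asymm h.2 hlt

end SignRepresentation

section Parabolic

variable {I : Set B}

theorem exists_wordProd_eq_of_mem_closure {w : W} (hw : w ∈ Subgroup.closure (cs.simple '' I)) :
    ∃ ω : List B, (∀ b ∈ ω, b ∈ I) ∧ cs.wordProd ω = w := by
  induction hw using Subgroup.closure_induction with
  | mem _ hx =>
    obtain ⟨b, hb, rfl⟩ := hx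
    exact ⟨[b], by simpa using hb, cs.wordProd_singleton b⟩
  | one => exact ⟨[], by simp, cs.wordProd_nil⟩
  | mul _ _ _ _ hx hy =>
    obtain ⟨ω₁, h₁, rfl⟩ := hx
    obtain ⟨ω₂, h₂, rfl⟩ := hy
    refine ⟨ω₁ ++ ω₂, fun b hb => ?_, cs.wordProd_append ω₁ ω₂⟩
    rcases List.mem_append.mp hb with hb | hb
    exacts [h₁ b hb, h₂ b hb]
  | inv _ _ hx =>
    obtain ⟨ω, h, rfl⟩ := hx
    exact ⟨ω.reverse, fun b hb => h b (List.mem_reverse.mp hb), cs.wordProd_reverse ω⟩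

theorem mem_closure_of_mem_leftInvSeq {ω : List B} (h : ∀ b ∈ ω, b ∈ I) {r : W}
    (hr : r ∈ cs.leftInvSeq ω) : r ∈ Subgroup.closure (cs.simple '' I) := by
  induction ω generalizing r with
  | nil => simp at hr
  | cons i ω ih =>
    have hi : cs.simple i ∈ Subgroup.closure (cs.simple '' I) :=
      Subgroup.subset_closure ⟨i, h i List.mem_cons_self, rfl⟩
    simp only [leftInvSeq, List.mem_cons, List.mem_map] at hr
    rcases hr with rfl | ⟨r', hr', rfl⟩
    · exact hi
    · rw [MulAut.conj_apply]
      exact Subgroup.mul_mem _ (Subgroup.mul_mem _ hi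
        (ih (fun b hb => h b (List.mem_cons_of_mem _ hb)) hr')) (Subgroup.inv_mem _ hi)

theorem mem_closure_of_isLeftInversion {w r : W} (hw : w ∈ Subgroup.closure (cs.simple '' I))
    (h : cs.IsLeftInversion w r) : r ∈ Subgroup.closure (cs.simple '' I) := by
  obtain ⟨ω, hω, rfl⟩ := cs.exists_wordProd_eq_of_mem_closure hw
  exact cs.mem_closure_of_mem_leftInvSeq hω (cs.mem_leftInvSeq_of_isLeftInversion h)

theorem mem_of_isLeftDescent {w : W} (hw : w ∈ Subgroup.closure (cs.simple '' I)) {i : B}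
    (h : cs.IsLeftDescent w i) : i ∈ I :=
  cs.simple_mem_closure_simple_iff.mp
    (cs.mem_closure_of_isLeftInversion hw ((cs.isLeftInversion_simple_iff_isLeftDescent w i).mpr h))

theorem length_lt_length_simple_mul {w : W} (hw : w ∈ Subgroup.closure (cs.simple '' I)) {t : B}
    (ht : t ∉ I) : cs.length w < cs.length (cs.simple t * w) := by
  rcases cs.length_simple_mul w t with h | h
  · omega
  · exact absurd (cs.mem_of_isLeftDescent hw (by rw [IsLeftDescent]; omega)) ht

theorem conj_simple_mem_closure_of_isLeftDescent {w : W} (hw : w ∈ Subgroup.closure (cs.simple '' I)) {t : B}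
    (ht : t ∉ I) (hcomm : Commute w (cs.simple t)) {i : B} (hi : cs.IsLeftDescent w i) :
    cs.simple t * cs.simple i * cs.simple t ∈ Subgroup.closure (cs.simple '' I) := by
  obtain ⟨ω, hω, rfl⟩ := cs.exists_wordProd_eq_of_mem_closure hw
  have hinv : cs.IsLeftInversion (cs.wordProd (t :: ω)) (cs.simple i) := by
    refine ⟨cs.isReflection_simple i, ?_⟩
    have hle := cs.length_mul_le (cs.simple i * cs.wordProd ω) (cs.simple t)
    have hlt := cs.length_lt_length_simple_mul hw ht
    rw [IsLeftDescent] at hi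
    have hswap : cs.simple i * (cs.simple t * cs.wordProd ω) =
        cs.simple i * cs.wordProd ω * cs.simple t := by rw [← hcomm.eq, mul_assoc]
    rw [wordProd_cons, hswap]
    rw [length_simple] at hle
    omega
  have hmem := cs.mem_leftInvSeq_of_isLeftInversion hinv
  simp only [leftInvSeq, List.mem_cons, List.mem_map] at hmem
  rcases hmem with hit | ⟨r, hr, hconj⟩
  · have hiI : cs.simple i ∈ Subgroup.closure (cs.simple '' I) :=
      Subgroup.subset_closure ⟨i, cs.mem_of_isLeftDescent hw hi, rfl⟩
    rw [← hit]
    simpa using hiI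
  · rw [MulAut.conj_apply, inv_simple] at hconj
    rw [← hconj]
    simpa [mul_assoc] using cs.mem_closure_of_mem_leftInvSeq hω hr

theorem eq_two_of_conj_simple_mem_closure {i t : B} (hi : i ∈ I) (ht : t ∉ I)
    (h : cs.simple t * cs.simple i * cs.simple t ∈ Subgroup.closure (cs.simple '' I)) :
    M i t = 2 := by
  have hit : i ≠ t := by rintro rfl; exact ht hi
  have hlt := cs.length_lt_length_simple_mul h ht
  have hle : cs.length (cs.simple t * (cs.simple t * cs.simple i * cs.simple t)) ≤ 2 := by
    rw [← mul_assoc, ← mul_assoc, simple_mul_simple_self, one_mul]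
    simpa using cs.length_mul_le (cs.simple i) (cs.simple t)
  have hodd := (show cs.IsReflection (cs.simple t * cs.simple i * cs.simple t) from
    ⟨cs.simple t, i, by rw [inv_simple]⟩).odd_length
  have hlength : cs.length (cs.simple t * cs.simple i * cs.simple t) = 1 := by
    obtain ⟨k, hk⟩ := hodd
    omega
  obtain ⟨j, hj⟩ := cs.length_eq_one_iff.mp hlength
  have hjI : j ∈ I := cs.simple_mem_closure_simple_iff.mp (hj ▸ h)
  have hjit : j ∈ ({i, t} : Set B) := by
    refine cs.simple_mem_closure_simple_iff.mp (hj ▸ ?_)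
    have hs (b : B) (hb : b ∈ ({i, t} : Set B)) :
        cs.simple b ∈ Subgroup.closure (cs.simple '' {i, t}) := Subgroup.subset_closure ⟨b, hb, rfl⟩
    exact Subgroup.mul_mem _ (Subgroup.mul_mem _ (hs t (by simp)) (hs i (by simp))) (hs t (by simp))
  obtain rfl : j = i := hjit.resolve_right fun hjt => ht (hjt ▸ hjI)
  refine cs.eq_two_of_commute hit ?_
  calc cs.simple j * cs.simple t
      = cs.simple t * (cs.simple t * cs.simple j * cs.simple t) := by simp [mul_assoc]
    _ = cs.simple t * cs.simple j := by rw [hj]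

theorem mem_closure_of_commute {t : B} (ht : t ∉ I) {w : W}
    (hw : w ∈ Subgroup.closure (cs.simple '' I)) (hcomm : Commute w (cs.simple t)) :
    w ∈ Subgroup.closure (cs.simple '' {s | s ∈ I ∧ M s t = 2}) := by
  induction hn : cs.length w using Nat.strong_induction_on generalizing w with
  | _ n ih =>
  rcases eq_or_ne w 1 with rfl | hw1
  · exact Subgroup.one_mem _
  obtain ⟨i, hi⟩ := cs.exists_leftDescent_of_ne_one hw1
  have hiI := cs.mem_of_isLeftDescent hw hi
  have hM : M i t = 2 :=
    cs.eq_two_of_conj_simple_mem_closure hiI ht (cs.conj_simple_mem_closure_of_isLeftDescent hw ht hcomm hi)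
  have hsi : cs.simple i ∈ Subgroup.closure (cs.simple '' {s | s ∈ I ∧ M s t = 2}) :=
    Subgroup.subset_closure ⟨i, ⟨hiI, hM⟩, rfl⟩
  have hrest := ih _ (hn ▸ hi) (Subgroup.mul_mem _ (Subgroup.subset_closure ⟨i, hiI, rfl⟩) hw)
    ((cs.simple_commute_of_eq_two hM).mul_left hcomm) rfl
  simpa using Subgroup.mul_mem _ hsi hrest

theorem commute_of_mem_closure {J : Set B} {t : B} (hJ : ∀ j ∈ J, M j t = 2) {w : W}
    (hw : w ∈ Subgroup.closure (cs.simple '' J)) : Commute w (cs.simple t) := by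
  refine Subgroup.mem_centralizer_singleton_iff.mp (Subgroup.closure_le _ |>.mpr ?_ hw)
  rintro _ ⟨j, hj, rfl⟩
  exact Subgroup.mem_centralizer_singleton_iff.mpr (cs.simple_commute_of_eq_two (hJ j hj)).eq

end Parabolic

end CoxeterSystem

/-- Let `(W, S)` be a Coxeter system, `I ⊆ S`, and `t ∈ S \ I`.
Then the centraliser of `t` in the parabolic subgroup `W_I` equals `W_{I(t)}` where
`I(t) = {s ∈ I : m_{s,t} = 2}`; consequently the conjugacy orbit
`t^{W_I} = {w t w⁻¹ : w ∈ W_I}` is in bijection with `W_I / W_{I(t)}`. -/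
theorem centralizer_of_simple_in_parabolic {B W : Type*} [Group W] {M : CoxeterMatrix B}
    (cs : CoxeterSystem M W) (I : Set B) (t : B) (ht : t ∉ I) :
    (∀ w ∈ Subgroup.closure (cs.simple '' I),
      (w * cs.simple t = cs.simple t * w ↔
        w ∈ Subgroup.closure (cs.simple '' {s | s ∈ I ∧ M s t = 2}))) ∧
    Nonempty
      ({x : W // ∃ w ∈ Subgroup.closure (cs.simple '' I), x = w * cs.simple t * w⁻¹} ≃
        (Subgroup.closure (cs.simple '' I) ⧸
          ((Subgroup.closure (cs.simple '' {s | s ∈ I ∧ M s t = 2})).subgroupOf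
            (Subgroup.closure (cs.simple '' I))))) := by
  have hcentralizer : ∀ w ∈ Subgroup.closure (cs.simple '' I),
      (w * cs.simple t = cs.simple t * w ↔
        w ∈ Subgroup.closure (cs.simple '' {s | s ∈ I ∧ M s t = 2})) := fun w hw =>
    ⟨cs.mem_closure_of_commute ht hw, cs.commute_of_mem_closure fun _ hj => hj.2⟩
  exact ⟨hcentralizer, ⟨Subgroup.conjOrbitEquivQuotient _ _ _ hcentralizer⟩⟩
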